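/- For 1 ≤ r ≤ s and m ≥ k_r + 1, the weight of permutations using at most r−1 selections satisfies T_{≤r−1}(m, k₁,…,k_r) = (P_{m−1})! · θ^{m−k_r} · P_{k_r} + (P_{m−1})! · Σ_{i=k_r}^{m−1} (T_{≤r−2}(i, k₁,…,k_{r−1}) / (P_i)!) · θ^{m−1−i}. -/

import Mathlib

open Finset

/-- Number of inversions (Kendall tau statistic) of a permutation. -/
def inversions {N : ℕ} (π : Equiv.Perm (Fin N)) : ℕ :=
  (Finset.univ.filter (fun x : Fin N × Fin N => x.1 < x.2 ∧ π x.2 < π x.1)).card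

/-- `P_k(θ) = 1 + θ + … + θ^(k-1)`. -/
def mallowsP (θ : ℝ) (k : ℕ) : ℝ := ∑ i ∈ Finset.range k, θ ^ i

/-- `(P_k)! = P_k · P_(k-1) · … · P_1`. -/
def mallowsPFact (θ : ℝ) (k : ℕ) : ℝ := ∏ j ∈ Finset.range k, mallowsP θ (j + 1)

/-- Positions (0-indexed) selected by the multi-threshold strategy: for each
threshold `k` in the list, the next selection is at the first position `p` with
`p ≥ k` (i.e. the first `k` candidates are rejected), `p ≥ lo` (after the previous
selection), and `p` a left-to-right maximum. -/
def selList {N : ℕ} (π : Equiv.Perm (Fin N)) : List ℕ → ℕ → List (Fin N)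
  | [], _ => []
  | k :: ks, lo =>
    let s : Finset (Fin N) := Finset.univ.filter
      (fun p => max k lo ≤ (p : ℕ) ∧ ∀ q : Fin N, q < p → π q < π p)
    if h : s.Nonempty then s.min' h :: selList π ks ((s.min' h : ℕ) + 1) else []

/-- The strategy wins on `π` if the position holding the largest value is selected. -/
def winnable {N : ℕ} (π : Equiv.Perm (Fin N)) (ks : List ℕ) : Prop :=
  ∃ p ∈ selList π ks 0, ∀ q : Fin N, π q ≤ π p

instance {N : ℕ} (π : Equiv.Perm (Fin N)) (ks : List ℕ) : Decidable (winnable π ks) :=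
  inferInstanceAs (Decidable (∃ p ∈ selList π ks 0, ∀ q : Fin N, π q ≤ π p))

/-- `W(N, k₁, …, k_s) = Σ_(winnable π ∈ S_N) θ^(c(π))`. -/
def winW (θ : ℝ) (N : ℕ) (ks : List ℕ) : ℝ :=
  ∑ π : Equiv.Perm (Fin N), if winnable π ks then θ ^ inversions π else 0

/-- `T_{≤j}(m, k₁, …, k_r)`: weight of permutations of `S_m` on which the strategy
makes at most `j` selections (with `j : ℤ`, so `T_{≤-1} = 0`). -/
def Tle (θ : ℝ) (m : ℕ) (ks : List ℕ) (j : ℤ) : ℝ :=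
  ∑ π : Equiv.Perm (Fin m),
    if ((selList π ks 0).length : ℤ) ≤ j then θ ^ inversions π else 0

/-- `T_j(m, k₁, …, k_r)`: weight of permutations of `S_m` on which the strategy
makes exactly `j` selections. -/
def Texact (θ : ℝ) (m : ℕ) (ks : List ℕ) (j : ℕ) : ℝ :=
  ∑ π : Equiv.Perm (Fin m),
    if (selList π ks 0).length = j then θ ^ inversions π else 0

/-!
Write `π ∈ S_(n+1)` as its last value `v` together with the pattern `ρ ∈ S_n` of its first `n`
values; then `c(π) = (n - v) + c(ρ)`. If `v` is not the maximum, the last position is not a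
left-to-right maximum and the strategy makes the same selections on `π` as on `ρ`; if it is,
the strategy additionally selects the last position exactly when a threshold is still unused.
Hence `T_{≤j}(n+1) = θ P_n T_{≤j}(n) + T_{≤j-1}(n)` whenever all thresholds are at most `n` and
`j` is below their number, and the closed form solves this recurrence starting from
`T_{≤r-1}(k_r) = (P_{k_r})!`.
-/
section Insertion

variable {n : ℕ}

/-- The permutation whose last value is `v` and whose first `n` values are ordered like `ρ`. -/
def insertLast (v : Fin (n + 1)) (ρ : Equiv.Perm (Fin n)) : Equiv.Perm (Fin (n + 1)) :=
  finSuccEquivLast.trans (ρ.optionCongr.trans (finSuccEquiv' v).symm)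

@[simp]
lemma insertLast_last (v : Fin (n + 1)) (ρ : Equiv.Perm (Fin n)) :
    insertLast v ρ (Fin.last n) = v := by
  simp [insertLast]

@[simp]
lemma insertLast_castSucc (v : Fin (n + 1)) (ρ : Equiv.Perm (Fin n)) (q : Fin n) :
    insertLast v ρ q.castSucc = v.succAbove (ρ q) := by
  simp [insertLast]

lemma insertLast_injective :
    Function.Injective (fun x : Fin (n + 1) × Equiv.Perm (Fin n) => insertLast x.1 x.2) := by
  rintro ⟨v, ρ⟩ ⟨v', ρ'⟩ h
  obtain rfl : v = v' := by simpa using congr($h (Fin.last n))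
  congr
  exact Equiv.ext fun q => by simpa using congr($h q.castSucc)

lemma sum_perm_succ {M : Type*} [AddCommMonoid M] (f : Equiv.Perm (Fin (n + 1)) → M) :
    ∑ π, f π = ∑ v, ∑ ρ, f (insertLast v ρ) := by
  have hbij : Function.Bijective
      (fun x : Fin (n + 1) × Equiv.Perm (Fin n) => insertLast x.1 x.2) := by
    rw [Fintype.bijective_iff_injective_and_card]
    refine ⟨insertLast_injective, ?_⟩
    simp [Fintype.card_perm, Nat.factorial_succ]
  rw [← Fintype.sum_prod_type', Fintype.sum_bijective _ hbij _ _ fun _ => rfl]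

lemma inversions_eq_sum {N : ℕ} (π : Equiv.Perm (Fin N)) :
    inversions π = ∑ j, #{i | i < j ∧ π j < π i} := by
  simp only [inversions, card_filter, Fintype.sum_prod_type_right]

lemma card_inversions_castSucc (v : Fin (n + 1)) (ρ : Equiv.Perm (Fin n)) (j : Fin n) :
    #{i | i < j.castSucc ∧ insertLast v ρ j.castSucc < insertLast v ρ i} =
      #{i | i < j ∧ ρ j < ρ i} := by
  rw [card_filter, card_filter, Fin.sum_univ_castSucc]
  simp [Fin.succAbove_lt_succAbove_iff, (Fin.castSucc_lt_last j).not_gt]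

lemma card_inversions_last (v : Fin (n + 1)) (ρ : Equiv.Perm (Fin n)) :
    #{i | i < Fin.last n ∧ insertLast v ρ (Fin.last n) < insertLast v ρ i} = n - v := by
  set π := insertLast v ρ
  have hlast : ∀ i, v < π i → i < Fin.last n := fun i hi =>
    Fin.lt_last_iff_ne_last.mpr (by rintro rfl; simp [π] at hi)
  calc #{i | i < Fin.last n ∧ π (Fin.last n) < π i}
      = #{i | v < π i} := by
        congr 1; ext i; simpa [π] using hlast i
    _ = #{w | v < w} := by
        simp only [card_filter]; exact Equiv.sum_comp π (fun w => if v < w then 1 else 0)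
    _ = n - v := by simp [filter_lt_eq_Ioi]

lemma inversions_insertLast (v : Fin (n + 1)) (ρ : Equiv.Perm (Fin n)) :
    inversions (insertLast v ρ) = (n - v) + inversions ρ := by
  rw [inversions_eq_sum, inversions_eq_sum, Fin.sum_univ_castSucc, card_inversions_last]
  simp only [card_inversions_castSucc]
  ring

end Insertion

section MallowsP

lemma mallowsP_succ (θ : ℝ) (n : ℕ) : mallowsP θ (n + 1) = θ * mallowsP θ n + 1 :=
  geom_sum_succ

lemma mallowsPFact_succ (θ : ℝ) (n : ℕ) :
    mallowsPFact θ (n + 1) = mallowsPFact θ n * mallowsP θ (n + 1) :=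
  prod_range_succ _ _

lemma mallowsP_succ_pos {θ : ℝ} (hθ : 0 < θ) (n : ℕ) : 0 < mallowsP θ (n + 1) :=
  sum_pos (fun i _ => pow_pos hθ i) nonempty_range_add_one

lemma mallowsPFact_pos {θ : ℝ} (hθ : 0 < θ) (n : ℕ) : 0 < mallowsPFact θ n :=
  prod_pos fun j _ => mallowsP_succ_pos hθ j

lemma sum_pow_sub_val (θ : ℝ) (n : ℕ) : ∑ v : Fin n, θ ^ (n - (v : ℕ)) = θ * mallowsP θ n := by
  rw [mallowsP, mul_sum, ← sum_range_reflect, Fin.sum_univ_eq_sum_range (fun i => θ ^ (n - i))]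
  refine sum_congr rfl fun i hi => ?_
  rw [← pow_succ']
  congr 1
  simp at hi
  omega

lemma sum_pow_sub_val_succ (θ : ℝ) (n : ℕ) :
    ∑ v : Fin (n + 1), θ ^ (n - (v : ℕ)) = mallowsP θ (n + 1) := by
  simp [Fin.sum_univ_castSucc, sum_pow_sub_val, mallowsP_succ]

lemma sum_pow_inversions (θ : ℝ) (n : ℕ) :
    ∑ π : Equiv.Perm (Fin n), θ ^ inversions π = mallowsPFact θ n := by
  induction n with
  | zero => simp [inversions, mallowsPFact]
  | succ n ih =>
    simp only [sum_perm_succ, inversions_insertLast, pow_add, ← mul_sum, ← sum_mul, ih,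
      sum_pow_sub_val_succ, mallowsPFact_succ, mul_comm]

end MallowsP

section Selection

variable {N : ℕ}

def eligible (π : Equiv.Perm (Fin N)) (k lo : ℕ) : Finset (Fin N) :=
  {p | max k lo ≤ (p : ℕ) ∧ ∀ q, q < p → π q < π p}

lemma selList_cons (π : Equiv.Perm (Fin N)) (k : ℕ) (l : List ℕ) (lo : ℕ) :
    selList π (k :: l) lo = if h : (eligible π k lo).Nonempty
      then (eligible π k lo).min' h :: selList π l (((eligible π k lo).min' h : ℕ) + 1)
      else [] :=
  rfl

lemma eligible_eq_empty_of_le (π : Equiv.Perm (Fin N)) {k lo : ℕ} (h : N ≤ max k lo) :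
    eligible π k lo = ∅ := by
  ext p
  simp only [eligible, mem_filter, mem_univ, true_and, notMem_empty, iff_false, not_and]
  exact fun hp => absurd (h.trans hp) (not_le.mpr p.isLt)

lemma selList_eq_nil_of_le (π : Equiv.Perm (Fin N)) (l : List ℕ) {lo : ℕ} (h : N ≤ lo) :
    selList π l lo = [] := by
  cases l with
  | nil => rfl
  | cons k l => simp [selList_cons, eligible_eq_empty_of_le π (h.trans (le_max_right k lo))]

lemma length_selList_le (π : Equiv.Perm (Fin N)) (l : List ℕ) (lo : ℕ) :
    (selList π l lo).length ≤ l.length := by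
  induction l generalizing lo with
  | nil => simp [selList]
  | cons k l ih =>
    rw [selList_cons]
    split
    · simpa using ih _
    · simp

lemma selList_append_singleton_of_le (π : Equiv.Perm (Fin N)) (l : List ℕ) (lo : ℕ) {k : ℕ}
    (h : N ≤ k) : selList π (l ++ [k]) lo = selList π l lo := by
  induction l generalizing lo with
  | nil => simp [selList_cons, eligible_eq_empty_of_le π (h.trans (le_max_left k lo)), selList]
  | cons k' l ih =>
    rw [List.cons_append, selList_cons, selList_cons]
    split <;> simp [ih]

lemma min_length_selList_append (π : Equiv.Perm (Fin N)) (l l' : List ℕ) (lo : ℕ) :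
    min (selList π (l ++ l') lo).length l.length = (selList π l lo).length := by
  induction l generalizing lo with
  | nil => simp [selList]
  | cons k l ih =>
    rw [List.cons_append, selList_cons, selList_cons]
    split <;> simp [ih]

end Selection

section SelectionInsertLast

variable {n : ℕ}

lemma castSucc_mem_eligible_insertLast_iff (v : Fin (n + 1)) (ρ : Equiv.Perm (Fin n))
    (k lo : ℕ) (p : Fin n) :
    p.castSucc ∈ eligible (insertLast v ρ) k lo ↔ p ∈ eligible ρ k lo := by
  simp only [eligible, mem_filter, mem_univ, true_and, Fin.val_castSucc]
  refine and_congr_right fun _ => ⟨fun h q hq => ?_, fun h q hq => ?_⟩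
  · simpa [Fin.succAbove_lt_succAbove_iff] using h q.castSucc (Fin.castSucc_lt_castSucc_iff.mpr hq)
  · obtain ⟨q, rfl⟩ := Fin.exists_castSucc_eq.mpr (Fin.ne_last_of_lt hq)
    simpa [Fin.succAbove_lt_succAbove_iff] using h q (Fin.castSucc_lt_castSucc_iff.mp hq)

lemma Equiv.Perm.forall_lt_last_apply_lt_iff (π : Equiv.Perm (Fin (n + 1))) :
    (∀ q < Fin.last n, π q < π (Fin.last n)) ↔ π (Fin.last n) = Fin.last n := by
  refine ⟨fun h => ?_, fun h q hq => ?_⟩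
  · by_contra hne
    have hq : π.symm (Fin.last n) < Fin.last n :=
      Fin.lt_last_iff_ne_last.mpr fun hq => hne (by simpa using congr(π $hq).symm)
    simpa using (h _ hq).trans_le (Fin.le_last _)
  · rw [h, Fin.lt_last_iff_ne_last, ← h]
    exact π.injective.ne (Fin.ne_last_of_lt hq)

lemma last_mem_eligible_insertLast_iff (v : Fin (n + 1)) (ρ : Equiv.Perm (Fin n)) (k lo : ℕ) :
    Fin.last n ∈ eligible (insertLast v ρ) k lo ↔ max k lo ≤ n ∧ v = Fin.last n := by
  simp only [eligible, mem_filter, mem_univ, true_and, Fin.val_last]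
  rw [Equiv.Perm.forall_lt_last_apply_lt_iff, insertLast_last]

lemma min'_eligible_insertLast (v : Fin (n + 1)) (ρ : Equiv.Perm (Fin n)) (k lo : ℕ)
    (h : (eligible ρ k lo).Nonempty) (hne : (eligible (insertLast v ρ) k lo).Nonempty) :
    (eligible (insertLast v ρ) k lo).min' hne = ((eligible ρ k lo).min' h).castSucc := by
  refine le_antisymm (min'_le _ _ ((castSucc_mem_eligible_insertLast_iff ..).mpr (min'_mem _ h)))
    (le_min' _ _ _ fun y hy => ?_)
  induction y using Fin.lastCases with
  | last => exact (Fin.castSucc_lt_last _).le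
  | cast p =>
    exact Fin.castSucc_le_castSucc_iff.mpr
      (min'_le _ _ ((castSucc_mem_eligible_insertLast_iff ..).mp hy))

lemma eligible_insertLast_of_eq_empty (v : Fin (n + 1)) (ρ : Equiv.Perm (Fin n)) (k lo : ℕ)
    (h : eligible ρ k lo = ∅) :
    eligible (insertLast v ρ) k lo =
      if max k lo ≤ n ∧ v = Fin.last n then {Fin.last n} else ∅ := by
  ext y
  induction y using Fin.lastCases with
  | last => rw [last_mem_eligible_insertLast_iff]; split_ifs <;> simp_all
  | cast p =>
    rw [castSucc_mem_eligible_insertLast_iff, h]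
    split_ifs <;> simp [(Fin.castSucc_lt_last p).ne]

lemma selList_insertLast (v : Fin (n + 1)) (ρ : Equiv.Perm (Fin n)) (l : List ℕ) {lo : ℕ}
    (hl : ∀ k ∈ l, k ≤ n) (hlo : lo ≤ n) :
    selList (insertLast v ρ) l lo = (selList ρ l lo).map Fin.castSucc ++
      if v = Fin.last n ∧ (selList ρ l lo).length < l.length then [Fin.last n] else [] := by
  induction l generalizing lo with
  | nil => simp [selList]
  | cons k l ih =>
    rw [selList_cons, selList_cons]
    by_cases h : (eligible ρ k lo).Nonempty
    · have hne : (eligible (insertLast v ρ) k lo).Nonempty :=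
        ⟨_, (castSucc_mem_eligible_insertLast_iff ..).mpr (min'_mem _ h)⟩
      rw [dif_pos hne, dif_pos h, min'_eligible_insertLast v ρ k lo h hne, Fin.val_castSucc,
        ih (fun k' hk' => hl k' (List.mem_cons_of_mem _ hk')) ((eligible ρ k lo).min' h).isLt]
      simp
    · rw [dif_neg h, eligible_insertLast_of_eq_empty v ρ k lo (not_nonempty_iff_eq_empty.mp h)]
      by_cases hv : v = Fin.last n
      · simp [hv, hl k List.mem_cons_self, hlo, selList_eq_nil_of_le]
      · simp [hv]

end SelectionInsertLast

section Tle

variable (θ : ℝ)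

lemma Tle_of_length_le {N : ℕ} {l : List ℕ} {j : ℤ} (h : l.length ≤ j) :
    Tle θ N l j = mallowsPFact θ N := by
  rw [Tle, ← sum_pow_inversions]
  refine sum_congr rfl fun π _ => if_pos ?_
  exact (Nat.cast_le.mpr (length_selList_le π l 0)).trans h

lemma Tle_append_singleton_of_le {N k : ℕ} (l : List ℕ) (j : ℤ) (h : N ≤ k) :
    Tle θ N (l ++ [k]) j = Tle θ N l j := by
  simp only [Tle, selList_append_singleton_of_le _ _ _ h]

lemma Tle_append_of_lt_length {N : ℕ} {l : List ℕ} (l' : List ℕ) {j : ℤ} (hj : j < l.length) :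
    Tle θ N (l ++ l') j = Tle θ N l j := by
  refine sum_congr rfl fun π _ => if_congr ?_ rfl rfl
  have := min_length_selList_append π l l' 0
  omega

theorem Tle_succ {n : ℕ} {l : List ℕ} {j : ℤ} (hl : ∀ k ∈ l, k ≤ n) (hj : j < l.length) :
    Tle θ (n + 1) l j = θ * mallowsP θ n * Tle θ n l j + Tle θ n l (j - 1) := by
  have hcastSucc (v : Fin n) :
      ∑ ρ, (if ((selList (insertLast v.castSucc ρ) l 0).length : ℤ) ≤ j
        then θ ^ inversions (insertLast v.castSucc ρ) else 0) =
        θ ^ (n - (v : ℕ)) * Tle θ n l j := by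
    rw [Tle, mul_sum]
    refine sum_congr rfl fun ρ _ => ?_
    simp [selList_insertLast _ _ _ hl (Nat.zero_le n), inversions_insertLast, pow_add,
      (Fin.castSucc_lt_last v).ne]
  have hlast (ρ : Equiv.Perm (Fin n)) :
      (if ((selList (insertLast (Fin.last n) ρ) l 0).length : ℤ) ≤ j
        then θ ^ inversions (insertLast (Fin.last n) ρ) else 0) =
      if ((selList ρ l 0).length : ℤ) ≤ j - 1 then θ ^ inversions ρ else 0 := by
    rw [selList_insertLast _ _ _ hl (Nat.zero_le n), inversions_insertLast]
    refine if_congr ?_ (by simp) rfl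
    have := length_selList_le ρ l 0
    split_ifs with hfree <;> simp only [List.length_append, List.length_map, List.length_cons,
      List.length_nil, true_and, not_lt] at hfree ⊢ <;> push_cast <;> omega
  rw [Tle, sum_perm_succ, Fin.sum_univ_castSucc, sum_congr rfl fun v _ => hcastSucc v,
    ← sum_mul, sum_pow_sub_val, sum_congr rfl fun ρ _ => hlast ρ]
  rfl

end Tle

lemma sum_Ico_succ_pow_sub {k m : ℕ} (hkm : k ≤ m) (θ : ℝ) (g : ℕ → ℝ) :
    ∑ i ∈ Ico k (m + 1), g i * θ ^ (m - i) = θ * ∑ i ∈ Ico k m, g i * θ ^ (m - 1 - i) + g m := by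
  rw [sum_Ico_succ_top hkm, Nat.sub_self, pow_zero, mul_one, mul_sum]
  congr 1
  refine sum_congr rfl fun i hi => ?_
  rw [show m - i = m - 1 - i + 1 by simp at hi; omega, pow_succ]
  ring

theorem eq_of_mallows_recurrence {θ : ℝ} (hθ : 0 < θ) {F G : ℕ → ℝ} {k : ℕ}
    (hbase : F k = mallowsPFact θ k)
    (hstep : ∀ n, k ≤ n → F (n + 1) = θ * mallowsP θ n * F n + G n) {m : ℕ} (hm : k + 1 ≤ m) :
    F m = mallowsPFact θ (m - 1) * (θ ^ (m - k) * mallowsP θ k) +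
      mallowsPFact θ (m - 1) * ∑ i ∈ Ico k m, (G i / mallowsPFact θ i) * θ ^ (m - 1 - i) := by
  have hpos := mallowsPFact_pos hθ
  induction m, hm using Nat.le_induction with
  | base =>
    rw [hstep k le_rfl, hbase, Nat.add_sub_cancel, Nat.add_sub_cancel_left, Nat.Ico_succ_singleton,
      sum_singleton, Nat.sub_self, pow_zero, mul_one, pow_one, mul_div_cancel₀ _ (hpos k).ne']
    ring
  | succ m hm ih =>
    obtain ⟨m, rfl⟩ : ∃ m', m = m' + 1 := ⟨m - 1, by omega⟩
    simp only [Nat.add_sub_cancel] at ih ⊢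
    rw [hstep _ (by omega), ih, sum_Ico_succ_pow_sub (m := m + 1) (by omega), mallowsPFact_succ,
      show m + 1 + 1 - k = m + 1 - k + 1 by omega, pow_succ, Nat.add_sub_cancel]
    field_simp [(hpos m).ne', (mallowsP_succ_pos hθ m).ne']
    ring

theorem stmt8 (θ : ℝ) (hθ : 0 < θ) (ks : List ℕ) (kr m : ℕ)
    (hsort : (ks ++ [kr]).Pairwise (· ≤ ·)) (hm : kr + 1 ≤ m) :
    Tle θ m (ks ++ [kr]) (ks.length : ℤ) =
      mallowsPFact θ (m - 1) * (θ ^ (m - kr) * mallowsP θ kr) +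
        mallowsPFact θ (m - 1) *
          ∑ i ∈ Finset.Ico kr m,
            (Tle θ i ks ((ks.length : ℤ) - 1) / mallowsPFact θ i) * θ ^ (m - 1 - i) := by
  have hks : ∀ k ∈ ks ++ [kr], k ≤ kr := by
    simpa [or_imp, forall_and] using (List.pairwise_append.mp hsort).2.2
  refine eq_of_mallows_recurrence (F := fun m => Tle θ m (ks ++ [kr]) ks.length)
    (G := fun i => Tle θ i ks (ks.length - 1)) hθ ?_ (fun n hn => ?_) hm
  · rw [Tle_append_singleton_of_le _ _ _ le_rfl, Tle_of_length_le _ le_rfl]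
  · rw [Tle_succ θ (fun k hk => (hks k hk).trans hn) (by simp),
      Tle_append_of_lt_length θ (j := ks.length - 1) _ (by simp)]
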